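/- arXiv:1609.07999 — 3 statements merged into one kernel-verified Lean document; each statement's English description precedes it below -/
import Mathlib

section
/- For all real x with 0 ≤ x ≤ 1, one has 2¹⁸·(f((1+x)/64) − f((1−x)/64)) = (19/2025)x + (2/27)x³ + (1/15)x⁵. -/
/-!
Since `f y = ∫₀^{2y} f`, we have `f' y = 2 f (2y)` for `y > 0`, so differentiating
`f ((1 + x) / 2c) ± f ((1 - x) / 2c)` in `x` gives `(f ((1 + x) / c) ∓ f ((1 - x) / c)) / c`.
Starting from `f ((1 + x) / 2) + f ((1 - x) / 2) = 1` and integrating five times on `[0, 1]`,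
these combinations are polynomials in `x`. The constants of integration `f (1/8)` and `f (1/32)`
are fixed by evaluating the differences at `x = 1`, using `f 0 = 0`.
-/

open Set

theorem hasDerivAt_of_eq_integral_two_mul {f : ℝ → ℝ} (hcont : ContinuousOn f (Ici 0))
    (hint : ∀ x : ℝ, 0 ≤ x → f x = ∫ t in (0:ℝ)..(2 * x), f t) {y : ℝ} (hy : 0 < y) :
    HasDerivAt f (2 * f (2 * y)) y := by
  have h2y : 0 < 2 * y := by linarith
  have hF : HasDerivAt (fun u => ∫ t in (0:ℝ)..u, f t) (f (2 * y)) (2 * y) :=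
    intervalIntegral.integral_hasDerivAt_right
      (hcont.mono (by simp [uIcc_of_le h2y.le, Icc_subset_Ici_self])).intervalIntegrable
      ((hcont.mono Ioi_subset_Ici_self).stronglyMeasurableAtFilter isOpen_Ioi _ h2y)
      (hcont.continuousAt (Ici_mem_nhds h2y))
  have hG := hF.comp y ((hasDerivAt_id y).const_mul 2)
  rw [mul_one, mul_comm] at hG
  exact hG.congr_of_eventuallyEq <|
    (eventually_gt_nhds hy).mono fun z hz => hint z hz.le

theorem hasDerivAt_comp_div_two_mul {f : ℝ → ℝ}
    (hderiv : ∀ y : ℝ, 0 < y → HasDerivAt f (2 * f (2 * y)) y)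
    {u : ℝ → ℝ} {u' x c : ℝ} (hc : 0 < c) (hu : HasDerivAt u u' x) (hux : 0 < u x) :
    HasDerivAt (fun y => f (u y / (2 * c))) (u' * f (u x / c) / c) x := by
  have h := (hderiv (u x / (2 * c)) (by positivity)).comp x (hu.div_const (2 * c))
  rw [mul_div_left_comm, mul_div_mul_left _ _ two_ne_zero] at h
  exact h.congr_deriv (by field_simp)

theorem combination_eq_of_hasDerivAt {f : ℝ → ℝ} (hcont : ContinuousOn f (Ici 0))
    (hderiv : ∀ y : ℝ, 0 < y → HasDerivAt f (2 * f (2 * y)) y) {σ c d : ℝ} (hc : 0 < c)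
    (hd : 2 * c = d) {P p : ℝ → ℝ} (hP : ∀ x, HasDerivAt P (p x / c) x)
    (hp : ∀ x ∈ Ico (0:ℝ) 1, f ((1 + x) / c) - σ * f ((1 - x) / c) = p x)
    (h0 : (1 + σ) * f (1 / d) = P 0) :
    ∀ x ∈ Icc (0:ℝ) 1, f ((1 + x) / d) + σ * f ((1 - x) / d) = P x := by
  subst hd
  have hc2 : 0 < 2 * c := by positivity
  refine eq_of_has_deriv_right_eq (f' := fun x => p x / c) (fun x hx => ?_)
    (fun x _ => (hP x).hasDerivWithinAt) ?_ (fun x _ => (hP x).continuousAt.continuousWithinAt) ?_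
  · have hplus := hasDerivAt_comp_div_two_mul hderiv hc ((hasDerivAt_id' x).const_add 1)
      (by linarith [hx.1])
    have hminus := hasDerivAt_comp_div_two_mul hderiv hc ((hasDerivAt_id' x).const_sub 1)
      (by linarith [hx.2])
    rw [← hp x hx]
    exact ((hplus.add (hminus.const_mul σ)).congr_deriv (by ring)).hasDerivWithinAt
  · refine ContinuousOn.add (hcont.comp (by fun_prop) fun x hx => ?_)
      (continuousOn_const.mul (hcont.comp (by fun_prop) fun x hx => ?_))
    · exact div_nonneg (by linarith [hx.1]) hc2.le
    · exact div_nonneg (by linarith [hx.2]) hc2.le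
  · rw [← h0]
    simp only [add_zero, sub_zero]
    ring

structure IsFabius (f : ℝ → ℝ) : Prop where
  continuousOn : ContinuousOn f (Ici 0)
  add_apply_one_sub : ∀ x : ℝ, 0 ≤ x → x ≤ 1 → f x + f (1 - x) = 1
  eq_integral : ∀ x : ℝ, 0 ≤ x → f x = ∫ t in (0:ℝ)..(2 * x), f t

namespace IsFabius

variable {f : ℝ → ℝ}

theorem apply_zero (hf : IsFabius f) : f 0 = 0 := by
  simpa using hf.eq_integral 0 le_rfl

theorem hasDerivAt (hf : IsFabius f) {y : ℝ} (hy : 0 < y) : HasDerivAt f (2 * f (2 * y)) y :=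
  hasDerivAt_of_eq_integral_two_mul hf.continuousOn hf.eq_integral hy

theorem add_div_two (hf : IsFabius f) :
    ∀ x ∈ Icc (0:ℝ) 1, f ((1 + x) / 2) + f ((1 - x) / 2) = 1 := by
  intro x hx
  have h := hf.add_apply_one_sub ((1 + x) / 2) (by linarith [hx.1]) (by linarith [hx.2])
  rwa [show 1 - (1 + x) / 2 = (1 - x) / 2 by ring] at h

theorem sub_div_four (hf : IsFabius f) :
    ∀ x ∈ Icc (0:ℝ) 1, f ((1 + x) / 4) - f ((1 - x) / 4) = x / 2 := by
  simpa [sub_eq_add_neg] using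
    combination_eq_of_hasDerivAt (σ := -1) (c := 2) (d := 4) hf.continuousOn
      (fun _ => hf.hasDerivAt) (by norm_num) (by norm_num)
      (P := fun x => x / 2) (p := fun _ => 1)
      (fun x => by simpa using (hasDerivAt_id' x).div_const 2)
      (fun x hx => by simpa using hf.add_div_two x (Ico_subset_Icc_self hx))
      (by norm_num)

theorem add_div_eight (hf : IsFabius f) :
    ∀ x ∈ Icc (0:ℝ) 1, f ((1 + x) / 8) + f ((1 - x) / 8) = 2 * f (1 / 8) + x ^ 2 / 16 := by
  simpa using
    combination_eq_of_hasDerivAt (σ := 1) (c := 4) (d := 8) hf.continuousOn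
      (fun _ => hf.hasDerivAt) (by norm_num) (by norm_num)
      (P := fun x => 2 * f (1 / 8) + x ^ 2 / 16) (p := fun x => x / 2)
      (fun x => (((hasDerivAt_pow 2 x).div_const 16).const_add _).congr_deriv (by ring))
      (fun x hx => by simpa using hf.sub_div_four x (Ico_subset_Icc_self hx))
      (by norm_num)

theorem sub_div_sixteen (hf : IsFabius f) :
    ∀ x ∈ Icc (0:ℝ) 1,
      f ((1 + x) / 16) - f ((1 - x) / 16) = f (1 / 8) * x / 4 + x ^ 3 / 384 := by
  simpa [sub_eq_add_neg] using
    combination_eq_of_hasDerivAt (σ := -1) (c := 8) (d := 16) hf.continuousOn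
      (fun _ => hf.hasDerivAt) (by norm_num) (by norm_num)
      (P := fun x => f (1 / 8) * x / 4 + x ^ 3 / 384)
      (p := fun x => 2 * f (1 / 8) + x ^ 2 / 16)
      (fun x => ((((hasDerivAt_id' x).const_mul _).div_const 4).add
        ((hasDerivAt_pow 3 x).div_const 384)).congr_deriv (by norm_num; ring))
      (fun x hx => by simpa using hf.add_div_eight x (Ico_subset_Icc_self hx))
      (by norm_num)

theorem apply_one_div_eight (hf : IsFabius f) : f (1 / 8) = 1 / 288 := by
  have h := hf.sub_div_sixteen 1 (by norm_num)
  norm_num [hf.apply_zero] at h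
  linarith

theorem add_div_thirtyTwo (hf : IsFabius f) :
    ∀ x ∈ Icc (0:ℝ) 1, f ((1 + x) / 32) + f ((1 - x) / 32) =
      2 * f (1 / 32) + f (1 / 8) * x ^ 2 / 128 + x ^ 4 / 24576 := by
  simpa using
    combination_eq_of_hasDerivAt (σ := 1) (c := 16) (d := 32) hf.continuousOn
      (fun _ => hf.hasDerivAt) (by norm_num) (by norm_num)
      (P := fun x => 2 * f (1 / 32) + f (1 / 8) * x ^ 2 / 128 + x ^ 4 / 24576)
      (p := fun x => f (1 / 8) * x / 4 + x ^ 3 / 384)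
      (fun x => (((((hasDerivAt_pow 2 x).const_mul _).div_const 128).const_add _).add
        ((hasDerivAt_pow 4 x).div_const 24576)).congr_deriv (by norm_num; ring))
      (fun x hx => by simpa using hf.sub_div_sixteen x (Ico_subset_Icc_self hx))
      (by norm_num)

theorem sub_div_sixtyFour (hf : IsFabius f) :
    ∀ x ∈ Icc (0:ℝ) 1, f ((1 + x) / 64) - f ((1 - x) / 64) =
      f (1 / 32) * x / 16 + f (1 / 8) * x ^ 3 / 12288 + x ^ 5 / 3932160 := by
  simpa [sub_eq_add_neg] using
    combination_eq_of_hasDerivAt (σ := -1) (c := 32) (d := 64) hf.continuousOn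
      (fun _ => hf.hasDerivAt) (by norm_num) (by norm_num)
      (P := fun x => f (1 / 32) * x / 16 + f (1 / 8) * x ^ 3 / 12288 + x ^ 5 / 3932160)
      (p := fun x => 2 * f (1 / 32) + f (1 / 8) * x ^ 2 / 128 + x ^ 4 / 24576)
      (fun x => (((((hasDerivAt_id' x).const_mul _).div_const 16).add
        (((hasDerivAt_pow 3 x).const_mul _).div_const 12288)).add
        ((hasDerivAt_pow 5 x).div_const 3932160)).congr_deriv (by norm_num; ring))
      (fun x hx => by simpa using hf.add_div_thirtyTwo x (Ico_subset_Icc_self hx))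
      (by norm_num)

theorem apply_one_div_thirtyTwo (hf : IsFabius f) : f (1 / 32) = 19 / 33177600 := by
  have h := hf.sub_div_sixtyFour 1 (by norm_num)
  norm_num [hf.apply_zero, hf.apply_one_div_eight] at h
  linarith

end IsFabius

theorem fabius_stmt_5 (f : ℝ → ℝ)
    (hcont : ContinuousOn f (Set.Ici 0))
    (hsym : ∀ x : ℝ, 0 ≤ x → x ≤ 1 → f x + f (1 - x) = 1)
    (hint : ∀ x : ℝ, 0 ≤ x → f x = ∫ t in (0:ℝ)..(2 * x), f t) :
    ∀ x : ℝ, 0 ≤ x → x ≤ 1 →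
      2 ^ 18 * (f ((1 + x) / 64) - f ((1 - x) / 64)) = (19 / 2025) * x + (2 / 27) * x ^ 3 + (1 / 15) * x ^ 5 := by
  have hf : IsFabius f := ⟨hcont, hsym, hint⟩
  intro x hx0 hx1
  rw [hf.sub_div_sixtyFour x ⟨hx0, hx1⟩, hf.apply_one_div_eight, hf.apply_one_div_thirtyTwo]
  ring
end

section
/- For all real x with 0 ≤ x ≤ 1, one has 2³²·(f((1+x)/256) − f((1−x)/256)) = (583/2679075)x + (19/6075)x³ + (1/135)x⁵ + (1/315)x⁷. -/
/-!
Since `f (c ± s) = ∫ t in 0..2c ± 2s, f t`, the odd part `f (c + s) - f (c - s)` of `f` about a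
centre `c` is the integral over `[0, 2s]` of the even part about `2c`, and the even part about `c`
is `2 f c` plus the integral of the odd part about `2c`. The symmetry `f x + f (1 - x) = 1` says
that the even part about `1/2` is constant; halving the centre seven times turns this into
polynomial formulas. At each odd level, taking `s = c` expresses `f (2c) - f 0` through the unknown
constant `f (2c)` itself, which determines its value: `f (1/8) = 1/288`, `f (1/32) = 19/33177600`,
`f (1/128) = 583/179789679820800`.
-/

open Set intervalIntegral

structure FabiusEquation (f : ℝ → ℝ) : Prop where
  continuousOn : ContinuousOn f (Ici 0)
  eq_integral : ∀ x, 0 ≤ x → f x = ∫ t in (0:ℝ)..(2 * x), f t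

def oddPart (f : ℝ → ℝ) (c s : ℝ) : ℝ := f (c + s) - f (c - s)

def evenPart (f : ℝ → ℝ) (c s : ℝ) : ℝ := f (c + s) + f (c - s)

theorem integral_const_mul_id (a b c : ℝ) : ∫ x in a..b, c * x = c * ((b ^ 2 - a ^ 2) / 2) := by
  rw [integral_const_mul, integral_id]

namespace FabiusEquation

variable {f : ℝ → ℝ} {c d s : ℝ}

theorem apply_zero (hf : FabiusEquation f) : f 0 = 0 := by
  simpa using hf.eq_integral 0 le_rfl

theorem intervalIntegrable (hf : FabiusEquation f) {a b : ℝ} (ha : 0 ≤ a) (hb : 0 ≤ b) :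
    IntervalIntegrable f MeasureTheory.volume a b :=
  (hf.continuousOn.mono fun _ hx => (le_min ha hb).trans hx.1).intervalIntegrable

theorem integral_comp_add_left_eq (hf : FabiusEquation f) (hc : 0 ≤ c) (hcs : 0 ≤ c + s) :
    ∫ u in (0:ℝ)..2 * s, f (2 * c + u) = f (c + s) - f c := by
  have hsplit := integral_add_adjacent_intervals
    (hf.intervalIntegrable le_rfl (by linarith : 0 ≤ 2 * c))
    (hf.intervalIntegrable (by linarith) (by linarith : 0 ≤ 2 * c + 2 * s))
  rw [intervalIntegral.integral_comp_add_left, add_zero, hf.eq_integral _ hcs, hf.eq_integral _ hc,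
    mul_add, ← hsplit]
  ring

theorem integral_comp_sub_left_eq (hf : FabiusEquation f) (hc : 0 ≤ c) (hcs : 0 ≤ c - s) :
    ∫ u in (0:ℝ)..2 * s, f (2 * c - u) = f c - f (c - s) := by
  have hsplit := integral_add_adjacent_intervals
    (hf.intervalIntegrable le_rfl (by linarith : 0 ≤ 2 * c - 2 * s))
    (hf.intervalIntegrable (by linarith) (by linarith : 0 ≤ 2 * c))
  rw [intervalIntegral.integral_comp_sub_left, sub_zero, hf.eq_integral _ hcs, hf.eq_integral _ hc,
    mul_sub, ← hsplit]
  ring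

theorem intervalIntegrable_comp_add_left (hf : FabiusEquation f) (hc : 0 ≤ c) (hs : 0 ≤ s) :
    IntervalIntegrable (fun u => f (2 * c + u)) MeasureTheory.volume 0 (2 * s) := by
  refine (hf.continuousOn.comp (by fun_prop) fun u hu => ?_).intervalIntegrable
  rw [uIcc_of_le (by linarith)] at hu
  simp only [mem_Ici]
  linarith [hu.1]

theorem intervalIntegrable_comp_sub_left (hf : FabiusEquation f) (hs : s ∈ Icc 0 c) :
    IntervalIntegrable (fun u => f (2 * c - u)) MeasureTheory.volume 0 (2 * s) := by
  refine (hf.continuousOn.comp (by fun_prop) fun u hu => ?_).intervalIntegrable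
  rw [uIcc_of_le (by linarith [hs.1])] at hu
  simp only [mem_Ici]
  linarith [hu.2, hs.2]

theorem oddPart_eq_integral_evenPart (hf : FabiusEquation f) (hs : s ∈ Icc 0 c) :
    oddPart f c s = ∫ u in (0:ℝ)..2 * s, evenPart f (2 * c) u := by
  have hc : 0 ≤ c := hs.1.trans hs.2
  simp only [oddPart, evenPart]
  rw [integral_add (hf.intervalIntegrable_comp_add_left hc hs.1)
    (hf.intervalIntegrable_comp_sub_left hs), hf.integral_comp_add_left_eq hc (by linarith [hs.1]),
    hf.integral_comp_sub_left_eq hc (by linarith [hs.2])]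
  ring

theorem evenPart_eq_integral_oddPart (hf : FabiusEquation f) (hs : s ∈ Icc 0 c) :
    evenPart f c s = 2 * f c + ∫ u in (0:ℝ)..2 * s, oddPart f (2 * c) u := by
  have hc : 0 ≤ c := hs.1.trans hs.2
  simp only [oddPart, evenPart]
  rw [integral_sub (hf.intervalIntegrable_comp_add_left hc hs.1)
    (hf.intervalIntegrable_comp_sub_left hs), hf.integral_comp_add_left_eq hc (by linarith [hs.1]),
    hf.integral_comp_sub_left_eq hc (by linarith [hs.2])]
  ring

theorem oddPart_eq_integral_of_evenPart_eq (hf : FabiusEquation f) {p : ℝ → ℝ} (hd : 2 * c = d)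
    (hp : ∀ u ∈ Icc 0 d, evenPart f d u = p u) (hs : s ∈ Icc 0 c) :
    oddPart f c s = ∫ u in (0:ℝ)..2 * s, p u := by
  subst hd
  rw [hf.oddPart_eq_integral_evenPart hs]
  refine integral_congr fun u hu => hp u ?_
  rw [uIcc_of_le (by linarith [hs.1])] at hu
  exact ⟨hu.1, by linarith [hu.2, hs.2]⟩

theorem evenPart_eq_integral_of_oddPart_eq (hf : FabiusEquation f) {p : ℝ → ℝ} (hd : 2 * c = d)
    (hp : ∀ u ∈ Icc 0 d, oddPart f d u = p u) (hs : s ∈ Icc 0 c) :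
    evenPart f c s = 2 * f c + ∫ u in (0:ℝ)..2 * s, p u := by
  subst hd
  rw [hf.evenPart_eq_integral_oddPart hs]
  congr 1
  refine integral_congr fun u hu => hp u ?_
  rw [uIcc_of_le (by linarith [hs.1])] at hu
  exact ⟨hu.1, by linarith [hu.2, hs.2]⟩

end FabiusEquation

theorem evenPart_one_div_two {f : ℝ → ℝ} {s : ℝ}
    (hsym : ∀ x : ℝ, 0 ≤ x → x ≤ 1 → f x + f (1 - x) = 1) (hs : s ∈ Icc 0 (1 / 2)) :
    evenPart f (1 / 2) s = 1 := by
  have h := hsym (1 / 2 - s) (by linarith [hs.2]) (by linarith [hs.1])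
  rw [show (1:ℝ) - (1 / 2 - s) = 1 / 2 + s by ring] at h
  rw [evenPart]
  linarith

section FabiusFunction

variable {f : ℝ → ℝ} {s : ℝ} (hf : FabiusEquation f)
  (hsym : ∀ x : ℝ, 0 ≤ x → x ≤ 1 → f x + f (1 - x) = 1)

include hf hsym

theorem oddPart_one_div_four (hs : s ∈ Icc 0 (1 / 4)) : oddPart f (1 / 4) s = 2 * s := by
  rw [hf.oddPart_eq_integral_of_evenPart_eq (by norm_num)
    (fun u hu => evenPart_one_div_two hsym hu) hs]
  simp

theorem evenPart_one_div_eight (hs : s ∈ Icc 0 (1 / 8)) :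
    evenPart f (1 / 8) s = 2 * f (1 / 8) + 4 * s ^ 2 := by
  rw [hf.evenPart_eq_integral_of_oddPart_eq (by norm_num)
    (fun u hu => oddPart_one_div_four hf hsym hu) hs, integral_const_mul_id]
  ring

theorem oddPart_one_div_sixteen (hs : s ∈ Icc 0 (1 / 16)) :
    oddPart f (1 / 16) s = 4 * f (1 / 8) * s + 32 / 3 * s ^ 3 := by
  rw [hf.oddPart_eq_integral_of_evenPart_eq (by norm_num)
    (fun u hu => evenPart_one_div_eight hf hsym hu) hs]
  simp (disch := (apply Continuous.intervalIntegrable; fun_prop)) only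
    [integral_add, integral_pow, integral_const_mul, integral_const, smul_eq_mul]
  ring

theorem apply_one_div_eight : f (1 / 8) = 1 / 288 := by
  have h := oddPart_one_div_sixteen hf hsym (s := 1 / 16) ⟨by norm_num, le_rfl⟩
  norm_num [oddPart, hf.apply_zero] at h
  linarith

theorem evenPart_one_div_32 (hs : s ∈ Icc 0 (1 / 32)) :
    evenPart f (1 / 32) s = 2 * f (1 / 32) + 1 / 36 * s ^ 2 + 128 / 3 * s ^ 4 := by
  rw [hf.evenPart_eq_integral_of_oddPart_eq (by norm_num)
    (fun u hu => oddPart_one_div_sixteen hf hsym hu) hs]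
  simp (disch := (apply Continuous.intervalIntegrable; fun_prop)) only
    [integral_add, integral_pow, integral_const_mul, integral_const_mul_id]
  rw [apply_one_div_eight hf hsym]
  ring

theorem oddPart_one_div_64 (hs : s ∈ Icc 0 (1 / 64)) :
    oddPart f (1 / 64) s = 4 * f (1 / 32) * s + 2 / 27 * s ^ 3 + 4096 / 15 * s ^ 5 := by
  rw [hf.oddPart_eq_integral_of_evenPart_eq (by norm_num)
    (fun u hu => evenPart_one_div_32 hf hsym hu) hs]
  simp (disch := (apply Continuous.intervalIntegrable; fun_prop)) only
    [integral_add, integral_pow, integral_const_mul, integral_const, smul_eq_mul]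
  ring

theorem apply_one_div_32 : f (1 / 32) = 19 / 33177600 := by
  have h := oddPart_one_div_64 hf hsym (s := 1 / 64) ⟨by norm_num, le_rfl⟩
  norm_num [oddPart, hf.apply_zero] at h
  linarith

theorem evenPart_one_div_128 (hs : s ∈ Icc 0 (1 / 128)) :
    evenPart f (1 / 128) s =
      2 * f (1 / 128) + 19 / 4147200 * s ^ 2 + 8 / 27 * s ^ 4 + 131072 / 45 * s ^ 6 := by
  rw [hf.evenPart_eq_integral_of_oddPart_eq (by norm_num)
    (fun u hu => oddPart_one_div_64 hf hsym hu) hs]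
  simp (disch := (apply Continuous.intervalIntegrable; fun_prop)) only
    [integral_add, integral_pow, integral_const_mul, integral_const_mul_id]
  rw [apply_one_div_32 hf hsym]
  ring

theorem oddPart_one_div_256 (hs : s ∈ Icc 0 (1 / 256)) :
    oddPart f (1 / 256) s =
      4 * f (1 / 128) * s + 19 / 1555200 * s ^ 3 + 256 / 135 * s ^ 5 + 16777216 / 315 * s ^ 7 := by
  rw [hf.oddPart_eq_integral_of_evenPart_eq (by norm_num)
    (fun u hu => evenPart_one_div_128 hf hsym hu) hs]
  simp (disch := (apply Continuous.intervalIntegrable; fun_prop)) only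
    [integral_add, integral_pow, integral_const_mul, integral_const, smul_eq_mul]
  ring

theorem apply_one_div_128 : f (1 / 128) = 583 / 179789679820800 := by
  have h := oddPart_one_div_256 hf hsym (s := 1 / 256) ⟨by norm_num, le_rfl⟩
  norm_num [oddPart, hf.apply_zero] at h
  linarith

end FabiusFunction

theorem fabius_stmt_7 (f : ℝ → ℝ)
    (hcont : ContinuousOn f (Set.Ici 0))
    (hsym : ∀ x : ℝ, 0 ≤ x → x ≤ 1 → f x + f (1 - x) = 1)
    (hint : ∀ x : ℝ, 0 ≤ x → f x = ∫ t in (0:ℝ)..(2 * x), f t) :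
    ∀ x : ℝ, 0 ≤ x → x ≤ 1 →
      2 ^ 32 * (f ((1 + x) / 256) - f ((1 - x) / 256)) = (583 / 2679075) * x + (19 / 6075) * x ^ 3 + (1 / 135) * x ^ 5 + (1 / 315) * x ^ 7 := by
  have hf : FabiusEquation f := ⟨hcont, hint⟩
  intro x hx0 hx1
  have h := oddPart_one_div_256 hf hsym (s := x / 256) ⟨by positivity, by linarith⟩
  rw [oddPart, apply_one_div_128 hf hsym] at h
  rw [show (1 + x) / 256 = 1 / 256 + x / 256 by ring,
    show (1 - x) / 256 = 1 / 256 - x / 256 by ring, h]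
  ring
end

section
/- For all real x with 0 ≤ x ≤ 1, one has 2⁵⁰·(f((1+x)/1024) − f((1−x)/1024)) = (132809/40989847500)x + (583/8037225)x³ + (19/60750)x⁵ + (1/2835)x⁷ + (1/11340)x⁹. -/
/-!
With `D_N = symmComb f N (-1)` and `S_N = symmComb f N 1`, i.e.
`D_N x = f ((1+x)/N) - f ((1-x)/N)` and `S_N x = f ((1+x)/N) + f ((1-x)/N)`, differentiating the
functional equation `f x = ∫₀^{2x} f` gives `f' x = 2 f (2x)`, hence `D_{2M}' = S_M / M` and
`S_{2M}' = D_M / M` on `[0, 1]`. The symmetry `f x + f (1 - x) = 1` says `S_2 = 1`, so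
`D_4 x = x / 2`.
Integrating twice turns an odd polynomial formula for `D_M` into one for `D_{4M}`, up to the
constant `S_{2M} 0 = 2 f (1/(2M))`; this constant is fixed by evaluating at `x = 1`, where
`D_{4M} 1 = f (1/(2M)) - f 0 = f (1/(2M))`. Four such steps lead from `D_4` to `D_1024`.
-/

open Set intervalIntegral

noncomputable def symmComb (f : ℝ → ℝ) (N ε x : ℝ) : ℝ := f ((1 + x) / N) + ε * f ((1 - x) / N)

def oddPoly (c : ℕ → ℝ) (n : ℕ) (x : ℝ) : ℝ := ∑ i ∈ Finset.range n, c i * x ^ (2 * i + 1)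

noncomputable def nextCoeff (M : ℝ) (c : ℕ → ℝ) (n : ℕ) : ℕ → ℝ :=
  let w (i : ℕ) := c i / (2 * M ^ 2 * (2 * i + 2) * (2 * i + 3))
  fun
  | 0 => (∑ i ∈ Finset.range n, w i) / (M - 1)
  | i + 1 => w i

noncomputable def fabiusCoeff : ℕ → ℕ → ℝ
  | 0 => fun _ => 1 / 2
  | k + 1 => nextCoeff (4 ^ (k + 1)) (fabiusCoeff k) (k + 1)

theorem hasDerivAt_sum_monomial (a : ℕ → ℝ) (k : ℕ → ℕ) (n : ℕ) (x : ℝ) :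
    HasDerivAt (fun y => ∑ i ∈ Finset.range n, a i * y ^ (k i + 1))
      (∑ i ∈ Finset.range n, a i * (k i + 1) * x ^ k i) x := by
  refine (HasDerivAt.fun_sum fun i _ =>
    (hasDerivAt_pow (k i + 1) x).const_mul (a i)).congr_deriv ?_
  refine Finset.sum_congr rfl fun i _ => ?_
  push_cast
  ring

section
variable {f : ℝ → ℝ}

theorem hasDerivAt_of_forall_eq_integral (hcont : ContinuousOn f (Ici 0))
    (hint : ∀ x : ℝ, 0 ≤ x → f x = ∫ t in (0:ℝ)..(2 * x), f t) {y : ℝ} (hy : 0 < y) :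
    HasDerivAt f (2 * f (2 * y)) y := by
  have h2y : 0 < 2 * y := by positivity
  have hG : HasDerivAt (fun u => ∫ t in (0:ℝ)..u, f t) (f (2 * y)) (2 * y) :=
    integral_hasDerivAt_right
      (hcont.mono fun t ht => by rw [uIcc_of_le h2y.le] at ht; exact ht.1).intervalIntegrable
      (hcont.mono (Ioi_subset_Ici le_rfl) |>.stronglyMeasurableAtFilter isOpen_Ioi _ h2y)
      (hcont.continuousAt (Ici_mem_nhds h2y))
  have hcomp := hG.comp y ((hasDerivAt_id y).const_mul 2)
  rw [mul_one, mul_comm] at hcomp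
  refine hcomp.congr_of_eventuallyEq ?_
  filter_upwards [Ioi_mem_nhds hy] with t ht
  exact hint t ht.le

theorem hasDerivAt_symmComb (hderiv : ∀ y : ℝ, 0 < y → HasDerivAt f (2 * f (2 * y)) y)
    {M : ℝ} (hM : 0 < M) (ε : ℝ) {x : ℝ} (hx : x ∈ Ioo (-1) 1) :
    HasDerivAt (symmComb f (2 * M) ε) (symmComb f M (-ε) x / M) x := by
  have hplus := (hderiv ((1 + x) / (2 * M)) (div_pos (by linarith [hx.1]) (by positivity))).comp x
    (((hasDerivAt_id' x).const_add 1).div_const (2 * M))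
  have hminus := (hderiv ((1 - x) / (2 * M)) (div_pos (by linarith [hx.2]) (by positivity))).comp x
    (((hasDerivAt_id' x).const_sub 1).div_const (2 * M))
  have hM' : M ≠ 0 := hM.ne'
  have halve (y : ℝ) : 2 * (y / (2 * M)) = y / M := by field_simp
  rw [halve] at hplus hminus
  refine (hplus.add (hminus.const_mul ε)).congr_deriv ?_
  simp only [symmComb]
  field_simp

theorem continuousOn_symmComb (hcont : ContinuousOn f (Ici 0)) {N : ℝ} (hN : 0 < N) (ε : ℝ) :
    ContinuousOn (symmComb f N ε) (Icc (-1) 1) := by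
  refine (hcont.comp (by fun_prop) fun x hx => ?_).add
    ((hcont.comp (by fun_prop) fun x hx => ?_).const_smul ε)
  · exact div_nonneg (by linarith [hx.1]) hN.le
  · exact div_nonneg (by linarith [hx.2]) hN.le

theorem symmComb_two_mul_eq (hcont : ContinuousOn f (Ici 0))
    (hderiv : ∀ y : ℝ, 0 < y → HasDerivAt f (2 * f (2 * y)) y) {M : ℝ} (hM : 0 < M) (ε : ℝ)
    {P p : ℝ → ℝ} (hP : ∀ x, HasDerivAt P (p x) x) (hP0 : P 0 = 0)
    (h : ∀ x ∈ Icc (0 : ℝ) 1, symmComb f M (-ε) x = M * p x) :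
    ∀ x ∈ Icc (0 : ℝ) 1, symmComb f (2 * M) ε x = (1 + ε) * f (1 / (2 * M)) + P x := by
  have hIcc : Icc (0 : ℝ) 1 ⊆ Icc (-1) 1 := Icc_subset_Icc_left (by norm_num)
  have hPc : Continuous P := continuous_iff_continuousAt.2 fun x => (hP x).continuousAt
  refine eq_of_has_deriv_right_eq (f' := p) (fun x hx => ?_) (fun x hx => ?_)
    ((continuousOn_symmComb hcont (by positivity) ε).mono hIcc) (by fun_prop)
    (by rw [hP0, add_zero, symmComb, add_zero, sub_zero, add_mul, one_mul])
  · refine (hasDerivAt_symmComb hderiv hM ε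
      ⟨by linarith [hx.1], hx.2⟩).hasDerivWithinAt.congr_deriv ?_
    rw [h x (Ico_subset_Icc_self hx), mul_div_cancel_left₀ _ hM.ne']
  · exact ((hP x).const_add _).hasDerivWithinAt

theorem symmComb_two_mul_one_eq (hcont : ContinuousOn f (Ici 0))
    (hderiv : ∀ y : ℝ, 0 < y → HasDerivAt f (2 * f (2 * y)) y) {M : ℝ} (hM : 0 < M)
    {c : ℕ → ℝ} {n : ℕ} (h : ∀ x ∈ Icc (0 : ℝ) 1, symmComb f M (-1) x = oddPoly c n x) :
    ∀ x ∈ Icc (0 : ℝ) 1, symmComb f (2 * M) 1 x =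
      2 * f (1 / (2 * M)) + ∑ i ∈ Finset.range n, c i / (M * (2 * i + 2)) * x ^ (2 * i + 2) := by
  have hP (x : ℝ) : HasDerivAt
      (fun y => ∑ i ∈ Finset.range n, c i / (M * (2 * i + 2)) * y ^ (2 * i + 2))
      (oddPoly c n x / M) x := by
    refine (hasDerivAt_sum_monomial _ (fun i => 2 * i + 1) n x).congr_deriv ?_
    rw [oddPoly, Finset.sum_div]
    refine Finset.sum_congr rfl fun i _ => ?_
    push_cast
    field_simp
    ring
  intro x hx
  rw [symmComb_two_mul_eq hcont hderiv hM 1 hP (by simp)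
    (fun x hx => by rw [h x hx]; field_simp) x hx]
  norm_num

theorem symmComb_two_mul_neg_one_eq (hcont : ContinuousOn f (Ici 0))
    (hderiv : ∀ y : ℝ, 0 < y → HasDerivAt f (2 * f (2 * y)) y) {M : ℝ} (hM : 0 < M)
    (a : ℝ) {b : ℕ → ℝ} {n : ℕ}
    (h : ∀ x ∈ Icc (0 : ℝ) 1,
      symmComb f M 1 x = 2 * a + ∑ i ∈ Finset.range n, b i * x ^ (2 * i + 2)) :
    ∀ x ∈ Icc (0 : ℝ) 1, symmComb f (2 * M) (-1) x =
      2 * a / M * x + ∑ i ∈ Finset.range n, b i / (M * (2 * i + 3)) * x ^ (2 * i + 3) := by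
  have hP (x : ℝ) : HasDerivAt
      (fun y => 2 * a / M * y + ∑ i ∈ Finset.range n, b i / (M * (2 * i + 3)) * y ^ (2 * i + 3))
      ((2 * a + ∑ i ∈ Finset.range n, b i * x ^ (2 * i + 2)) / M) x := by
    refine (((hasDerivAt_id' x).const_mul _).add
      (hasDerivAt_sum_monomial _ (fun i => 2 * i + 2) n x)).congr_deriv ?_
    rw [add_div, Finset.sum_div]
    congr 1
    · ring
    refine Finset.sum_congr rfl fun i _ => ?_
    push_cast
    field_simp
    ring
  intro x hx
  rw [symmComb_two_mul_eq hcont hderiv hM (-1) hP (by simp)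
    (fun x hx => by rw [neg_neg, h x hx]; field_simp) x hx]
  norm_num

theorem symmComb_four_mul_neg_one_eq (hcont : ContinuousOn f (Ici 0))
    (hderiv : ∀ y : ℝ, 0 < y → HasDerivAt f (2 * f (2 * y)) y) (hf0 : f 0 = 0) {M : ℝ}
    (hM : 1 < M) {c : ℕ → ℝ} {n : ℕ}
    (h : ∀ x ∈ Icc (0 : ℝ) 1, symmComb f M (-1) x = oddPoly c n x) :
    ∀ x ∈ Icc (0 : ℝ) 1, symmComb f (4 * M) (-1) x = oddPoly (nextCoeff M c n) (n + 1) x := by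
  have hM0 : 0 < M := by linarith
  have hD := symmComb_two_mul_neg_one_eq hcont hderiv (by positivity) _
    (symmComb_two_mul_one_eq hcont hderiv hM0 h)
  have hcoeff (i : ℕ) :
      c i / (M * (2 * i + 2)) / (2 * M * (2 * i + 3)) = nextCoeff M c n (i + 1) := by
    simp only [nextCoeff]
    field_simp
  simp only [hcoeff, ← mul_assoc, show (2 : ℝ) * 2 = 4 by norm_num] at hD
  have hlead : 2 * f (1 / (2 * M)) / (2 * M) = nextCoeff M c n 0 := by
    have h1 := hD 1 (by simp)
    simp only [symmComb, one_pow, mul_one, sub_self, zero_div, hf0] at h1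
    rw [show (1 + 1) / (4 * M) = 1 / (2 * M) by ring] at h1
    rw [show nextCoeff M c n 0 =
        (∑ i ∈ Finset.range n, nextCoeff M c n (i + 1)) / (M - 1) from rfl,
      eq_div_iff (by linarith)]
    field_simp at h1 ⊢
    linarith
  intro x hx
  rw [hD x hx, oddPoly, Finset.sum_range_succ', hlead]
  simp only [mul_add]
  ring

theorem symmComb_four_pow_eq_oddPoly (hcont : ContinuousOn f (Ici 0))
    (hsym : ∀ x : ℝ, 0 ≤ x → x ≤ 1 → f x + f (1 - x) = 1)
    (hint : ∀ x : ℝ, 0 ≤ x → f x = ∫ t in (0:ℝ)..(2 * x), f t) (k : ℕ) :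
    ∀ x ∈ Icc (0 : ℝ) 1, symmComb f (4 ^ (k + 1)) (-1) x = oddPoly (fabiusCoeff k) (k + 1) x := by
  have hderiv (y : ℝ) (hy : 0 < y) := hasDerivAt_of_forall_eq_integral hcont hint hy
  induction k with
  | zero =>
    intro x hx
    have hP (x : ℝ) : HasDerivAt (fun y : ℝ => y / 2) (1 / 2) x := (hasDerivAt_id' x).div_const 2
    have h := symmComb_two_mul_eq hcont hderiv two_pos (-1) hP (zero_div 2) fun x hx => by
      have := hsym ((1 - x) / 2) (by linarith [hx.2]) (by linarith [hx.1])
      rw [show 1 - (1 - x) / 2 = (1 + x) / 2 by ring] at this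
      simp only [symmComb, neg_neg]
      linarith
    rw [show (4 : ℝ) ^ (0 + 1) = 2 * 2 by norm_num, h x hx]
    simp only [oddPoly, fabiusCoeff, zero_add, Finset.sum_range_one]
    ring
  | succ k ih =>
    rw [pow_succ']
    exact symmComb_four_mul_neg_one_eq hcont hderiv (by simpa using hint 0 le_rfl)
      (one_lt_pow₀ (by norm_num) k.succ_ne_zero) ih

end

theorem fabius_stmt_9 (f : ℝ → ℝ)
    (hcont : ContinuousOn f (Set.Ici 0))
    (hsym : ∀ x : ℝ, 0 ≤ x → x ≤ 1 → f x + f (1 - x) = 1)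
    (hint : ∀ x : ℝ, 0 ≤ x → f x = ∫ t in (0:ℝ)..(2 * x), f t) :
    ∀ x : ℝ, 0 ≤ x → x ≤ 1 →
      2 ^ 50 * (f ((1 + x) / 1024) - f ((1 - x) / 1024)) = (132809 / 40989847500) * x + (583 / 8037225) * x ^ 3 + (19 / 60750) * x ^ 5 + (1 / 2835) * x ^ 7 + (1 / 11340) * x ^ 9 := by
  intro x hx0 hx1
  have h := symmComb_four_pow_eq_oddPoly hcont hsym hint 4 x ⟨hx0, hx1⟩
  norm_num [symmComb, oddPoly, fabiusCoeff, nextCoeff, Finset.sum_range_succ] at h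
  linear_combination 2 ^ 50 * h
end
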